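/- arXiv:2304.08409 — 2 statements merged into one kernel-verified Lean document; each statement's English description precedes it below -/
import Mathlib

section
/- Let L → A → B be a semisplit square-zero extension of dg algebras, meaning the splitting A ≅ B ⊕ L is multiplicative (equivalently ξ = 0), so that ∂: B → L is a derivation. If x and y are Maurer–Cartan elements of B that are homotopy gauge equivalent via a quadruple (f, g, h₁, h₂), and x lifts to a Maurer–Cartan element of A, then y also lifts to a Maurer–Cartan element of A; explicitly, if x+l lifts x, then y + (f l g − ∂(f) g + ∂(y) h₂) is a lift of y. -/
def gsign (k : Type) [Field k] (i : ℤ) : k := if Even i then 1 else -1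

/-- Let `L → A → B` be a *semisplit* square-zero extension of dg algebras
(the splitting `s` is multiplicative, so `ξ = 0` and `∂` is a derivation).  If `x, y` are
homotopy gauge equivalent MC elements of `B` via `(f, g, h₁, h₂)` and `x + l` lifts `x`,
then `y + (f l g − ∂(f) g + ∂(y) h₂)` is a lift of `y`; in particular `y` also lifts. -/
theorem semisplit_squareZero_lift_transfer
    {k A B : Type} [Field k] [Ring A] [Ring B] [Algebra k A] [Algebra k B]
    (𝒜 : ℤ → Submodule k A) (ℬ : ℤ → Submodule k B)
    (dA : A →ₗ[k] A) (dB : B →ₗ[k] B)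
    (hdA2 : ∀ a : A, dA (dA a) = 0) (hdB2 : ∀ b : B, dB (dB b) = 0)
    (hdAdeg : ∀ i (a : A), a ∈ 𝒜 i → dA a ∈ 𝒜 (i + 1))
    (hdBdeg : ∀ i (b : B), b ∈ ℬ i → dB b ∈ ℬ (i + 1))
    (hleibA : ∀ i (a b : A), a ∈ 𝒜 i → dA (a * b) = dA a * b + gsign k i • (a * dA b))
    (hleibB : ∀ i (a b : B), a ∈ ℬ i → dB (a * b) = dB a * b + gsign k i • (a * dB b))
    -- the square-zero extension
    (π : A →ₐ[k] B) (hπsurj : Function.Surjective π)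
    (hπd : ∀ a : A, π (dA a) = dB (π a))
    (hπgr : ∀ i (a : A), a ∈ 𝒜 i → π a ∈ ℬ i)
    (hL2 : ∀ a a' : A, π a = 0 → π a' = 0 → a * a' = 0)
    -- a multiplicative (semisplit) graded splitting of `π`
    (s : B →ₗ[k] A) (hs : ∀ b : B, π (s b) = b)
    (hsgr : ∀ i (b : B), b ∈ ℬ i → s b ∈ 𝒜 i)
    (hsmul : ∀ b b' : B, s (b * b') = s b * s b') (hs1 : s 1 = 1)
    -- homotopy gauge equivalent MC elements `x`, `y` of `B`
    (x y : B) (hx : x ∈ ℬ 1) (hy : y ∈ ℬ 1)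
    (hmcx : dB x + x * x = 0) (hmcy : dB y + y * y = 0)
    (f g h₁ h₂ : B)
    (hf0 : f ∈ ℬ 0) (hg0 : g ∈ ℬ 0) (hh₁ : h₁ ∈ ℬ (-1)) (hh₂ : h₂ ∈ ℬ (-1))
    (hgauge1 : f * x = dB f + y * f)
    (hgauge2 : g * y = dB g + x * g)
    (hgauge3 : dB h₁ + x * h₁ + h₁ * x = g * f - 1)
    (hgauge4 : dB h₂ + y * h₂ + h₂ * y = f * g - 1)
    -- a lift `x + l` of `x` to `MC(A)`
    (l : A) (hl : π l = 0) (hl1 : l ∈ 𝒜 1)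
    (hlift : dA (s x + l) + (s x + l) * (s x + l) = 0) :
    -- the explicit lift of `y`: `l' = f l g − ∂(f) g + ∂(y) h₂`
    let l' := s f * l * s g - (dA (s f) - s (dB f)) * s g + (dA (s y) - s (dB y)) * s h₂
    π l' = 0 ∧ dA (s y + l') + (s y + l') * (s y + l') = 0 := by
  intro l'
  have hDapp : ∀ b : B, (dA ∘ₗ s - s ∘ₗ dB) b = dA (s b) - s (dB b) := fun _ => rfl
  set D : B →ₗ[k] A := dA ∘ₗ s - s ∘ₗ dB with hDdef
  -- gsign values
  have g0 : gsign k 0 = 1 := by norm_num [gsign]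
  have g1 : gsign k 1 = -1 := by norm_num [gsign]
  have g2 : gsign k 2 = 1 := by norm_num [gsign]
  -- specialized Leibniz rules
  have hA0 : ∀ a b : A, a ∈ 𝒜 0 → dA (a * b) = dA a * b + a * dA b := by
    intro a b h; rw [hleibA 0 a b h, g0, one_smul]
  have hA1 : ∀ a b : A, a ∈ 𝒜 1 → dA (a * b) = dA a * b - a * dA b := by
    intro a b h; rw [hleibA 1 a b h, g1, neg_smul, one_smul]; abel
  have hA2d : ∀ a b : A, a ∈ 𝒜 2 → dA (a * b) = dA a * b + a * dA b := by
    intro a b h; rw [hleibA 2 a b h, g2, one_smul]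
  have hB0 : ∀ a b : B, a ∈ ℬ 0 → dB (a * b) = dB a * b + a * dB b := by
    intro a b h; rw [hleibB 0 a b h, g0, one_smul]
  have hB1 : ∀ a b : B, a ∈ ℬ 1 → dB (a * b) = dB a * b - a * dB b := by
    intro a b h; rw [hleibB 1 a b h, g1, neg_smul, one_smul]; abel
  -- degrees
  have hF0 : s f ∈ 𝒜 0 := hsgr 0 f hf0
  have hDf1 : D f ∈ 𝒜 1 := by
    rw [hDapp]
    have h1 : dA (s f) ∈ 𝒜 1 := by have := hdAdeg 0 (s f) hF0; norm_num at this; exact this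
    have h2 : s (dB f) ∈ 𝒜 1 := by
      have := hdBdeg 0 f hf0; norm_num at this; exact hsgr 1 _ this
    exact sub_mem h1 h2
  have hDy2 : D y ∈ 𝒜 2 := by
    rw [hDapp]
    have h1 : dA (s y) ∈ 𝒜 2 := by
      have := hdAdeg 1 (s y) (hsgr 1 y hy); norm_num at this; exact this
    have h2 : s (dB y) ∈ 𝒜 2 := by
      have := hdBdeg 1 y hy; norm_num at this; exact hsgr 2 _ this
    exact sub_mem h1 h2
  -- π kills D
  have hπD : ∀ b : B, π (D b) = 0 := by
    intro b; rw [hDapp, map_sub, hπd, hs, hs, sub_self]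
  -- D is a derivation in the needed degrees
  have hder0 : ∀ b c : B, b ∈ ℬ 0 → D (b * c) = D b * s c + s b * D c := by
    intro b c hb
    rw [hDapp, hDapp, hDapp, hsmul, hA0 _ _ (hsgr 0 b hb), hB0 _ _ hb, map_add,
      hsmul (dB b) c, hsmul b (dB c)]
    noncomm_ring
  have hder1 : ∀ b c : B, b ∈ ℬ 1 → D (b * c) = D b * s c - s b * D c := by
    intro b c hb
    rw [hDapp, hDapp, hDapp, hsmul, hA1 _ _ (hsgr 1 b hb), hB1 _ _ hb, map_sub,
      hsmul (dB b) c, hsmul b (dB c)]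
    noncomm_ring
  -- dA ∘ D = - D ∘ dB
  have hdAD : ∀ b : B, dA (D b) = - D (dB b) := by
    intro b
    rw [hDapp, hDapp, map_sub, hdA2 (s b), hdB2 b, map_zero, sub_zero, zero_sub]
  -- identities in B
  have hdBf : dB f = f * x - y * f := by rw [hgauge1]; abel
  have hdBy : dB y = -(y * y) := eq_neg_of_add_eq_zero_left hmcy
  -- images under s of the MC equations
  have hsx2 : s x * s x = - s (dB x) := by
    have h := congrArg s hmcx
    rw [map_add, hsmul, map_zero] at h
    exact eq_neg_of_add_eq_zero_right h
  have hsy2 : s y * s y = - s (dB y) := by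
    have h := congrArg s hmcy
    rw [map_add, hsmul, map_zero] at h
    exact eq_neg_of_add_eq_zero_right h
  -- images under s of the gauge equations
  have e1 : s f * s x = s (dB f) + s y * s f := by
    have h := congrArg s hgauge1
    rwa [hsmul, map_add, hsmul] at h
  have e2 : s g * s y = s (dB g) + s x * s g := by
    have h := congrArg s hgauge2
    rwa [hsmul, map_add, hsmul] at h
  have e4 : s (dB h₂) + s y * s h₂ + s h₂ * s y = s f * s g - 1 := by
    have h := congrArg s hgauge4
    rwa [map_add, map_add, hsmul, hsmul, map_sub, hsmul, hs1] at h
  -- formulas for dA on the atoms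
  have A2 : dA (s f) = s f * s x - s y * s f + D f := by
    rw [hDapp, e1]; abel
  have A3 : dA (s g) = s g * s y - s x * s g + D g := by
    rw [hDapp, e2]; abel
  have A4 : dA (s h₂) = s f * s g - 1 + D h₂ - s y * s h₂ - s h₂ * s y := by
    rw [hDapp, ← e4]; abel
  have A1 : dA l = - D x - s x * l - l * s x := by
    have hll : l * l = 0 := hL2 l l hl hl
    have h := hlift
    have hexp : (s x + l) * (s x + l) = s x * s x + s x * l + l * s x + l * l := by
      noncomm_ring
    rw [map_add, hexp, hll, hsx2] at h
    rw [hDapp, ← sub_eq_zero, ← h]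
    abel
  have A5 : dA (D f) = -(D f * s x + s f * D x - D y * s f + s y * D f) := by
    rw [hdAD, hdBf, map_sub, hder0 f x hf0, hder1 y f hy]
    abel
  have A6 : dA (D y) = D y * s y - s y * D y := by
    rw [hdAD, hdBy, map_neg, hder1 y y hy]
    abel
  have hAY : dA (s y) = D y - s y * s y := by
    rw [hDapp, hsy2]; abel
  -- the lift element
  have hl'eq : l' = s f * (l * s g) - D f * s g + D y * s h₂ := by
    show s f * l * s g - (dA (s f) - s (dB f)) * s g + (dA (s y) - s (dB y)) * s h₂ = _
    rw [hDapp, hDapp]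
    noncomm_ring
  set E : A := s f * (l * s g) - D f * s g + D y * s h₂ with hEdef
  have hπE : π E = 0 := by
    rw [hEdef]
    simp [hl, hπD]
  have hEE : E * E = 0 := hL2 _ _ hπE hπE
  -- zero products in the square-zero ideal
  have z1 : D f * l = 0 := hL2 _ _ (hπD f) hl
  have z2 : l * D g = 0 := hL2 _ _ hl (hπD g)
  have z3 : D f * D g = 0 := hL2 _ _ (hπD f) (hπD g)
  have z4 : D y * D h₂ = 0 := hL2 _ _ (hπD y) (hπD h₂)
  refine ⟨by rw [hl'eq]; exact hπE, ?_⟩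
  rw [hl'eq, map_add]
  have hsq : (s y + E) * (s y + E) = s y * s y + s y * E + E * s y := by
    calc (s y + E) * (s y + E) = s y * s y + s y * E + E * s y + E * E := by noncomm_ring
      _ = s y * s y + s y * E + E * s y := by rw [hEE, add_zero]
  rw [hsq, hEdef, map_add, map_sub,
    hA0 (s f) (l * s g) hF0, hA1 l (s g) hl1, hA1 (D f) (s g) hDf1,
    hA2d (D y) (s h₂) hDy2, hAY, A2, A3, A1, A4, A5, A6]
  trans (D f * l * s g - s f * (l * D g) + D f * D g + D y * D h₂)
  · noncomm_ring
  · rw [show D f * l * s g = 0 by rw [z1, zero_mul],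
      show s f * (l * D g) = 0 by rw [z2, mul_zero], z3, z4]
    simp
end

section
/- Let C be a small category with two objects 0 and 1 and two mutually inverse morphisms (01): 0 → 1 and (10): 1 → 0 (so C is the indiscrete groupoid on two objects). Then C admits a strict symmetric monoidal structure given on objects by 0⊗0=0, 1⊗1=1, 0⊗1=1⊗0=0, and consequently the classifying space S^∞ := BC is a monoid in simplicial sets whose multiplication map μ: S^∞ × S^∞ → S^∞ satisfies μ∘(id × i₁) = id and μ∘(id × i₀) factors through a point, exhibiting S^∞ as ∞-contractible. -/
/-- Let `C` be the indiscrete groupoid on two objects `0, 1`.  The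
operation `⊗ = min` on objects (`0⊗0 = 0`, `1⊗1 = 1`, `0⊗1 = 1⊗0 = 0`) is a strict
symmetric monoidal structure on `C` with unit `1`, and consequently the classifying space
`S^∞ = BC` (whose `n`-simplices are all functions `Fin (n+1) → Fin 2`, with simplicial
structure by monotone reindexing) is a monoid in simplicial sets whose multiplication `μ`
(pointwise `min`) satisfies `μ ∘ (id × i₁) = id` and `μ ∘ (id × i₀)` factors through a
point, exhibiting `S^∞` as `∞`-contractible. -/
theorem infinite_sphere_infty_contractible :
    -- the symmetric monoidal structure on `C` at the level of objects
    (min (0 : Fin 2) 0 = 0 ∧ min (1 : Fin 2) 1 = 1 ∧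
      min (0 : Fin 2) 1 = 0 ∧ min (1 : Fin 2) 0 = 0 ∧
      (∀ a b c : Fin 2, min (min a b) c = min a (min b c)) ∧
      (∀ a b : Fin 2, min a b = min b a) ∧
      (∀ a : Fin 2, min a 1 = a ∧ min (1 : Fin 2) a = a))
    -- the induced multiplication `μ` on `S^∞ = BC`
    ∧ ∀ μ : ∀ n : ℕ, (Fin (n + 1) → Fin 2) → (Fin (n + 1) → Fin 2) → (Fin (n + 1) → Fin 2),
        (∀ n x y, μ n x y = fun a => min (x a) (y a)) →
        -- `μ` is a simplicial map `S^∞ × S^∞ → S^∞`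
        ((∀ m n (φ : Fin (m + 1) →o Fin (n + 1)) (x y : Fin (n + 1) → Fin 2),
            (μ n x y) ∘ φ = μ m (x ∘ φ) (y ∘ φ))
        -- associativity and unitality: `S^∞` is a monoid in simplicial sets
        ∧ (∀ n x y z, μ n (μ n x y) z = μ n x (μ n y z))
        ∧ (∀ n x, μ n (fun _ => 1) x = x ∧ μ n x (fun _ => 1) = x)
        -- `μ ∘ (id × i₁) = id`
        ∧ (∀ n (x : Fin (n + 1) → Fin 2), μ n x (fun _ => 1) = x)
        -- `μ ∘ (id × i₀)` factors through a point: it is the constant map at the vertex 0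
        ∧ (∀ n (x : Fin (n + 1) → Fin 2), μ n x (fun _ => 0) = fun _ => 0)) := by
  refine ⟨⟨rfl, rfl, rfl, rfl, by decide, by decide, by decide⟩, ?_⟩
  intro μ hμ
  have le1 : ∀ a : Fin 2, a ≤ 1 := by decide
  refine ⟨?_, ?_, ?_, ?_, ?_⟩ <;> intros <;> simp only [hμ] <;>
    first
    | (funext a; simp [min_assoc, le1])
    | exact ⟨by funext a; simp [le1], by funext a; simp [le1]⟩
end
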